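/- Fix a sequence s and a window size ρ. Let G be a strict, transitively closed episode. If e is a derivable proper skeleton edge of G, then icl(G) = icl(G − e). If v is a derivable solitary node of G, then icl(G) = icl(G − v). -/

import Mathlib

open scoped Classical

/-- An episode: a finite directed acyclic graph with nodes drawn from `ℕ`,
labelled by symbols of an alphabet `α`. -/
structure Episode (α : Type*) where
  nodes : Finset ℕ
  edge : ℕ → ℕ → Prop
  lab : ℕ → α
  edge_mem : ∀ ⦃x y : ℕ⦄, edge x y → x ∈ nodes ∧ y ∈ nodes

namespace Episode

variable {α : Type*}

/-- Transitively closed: whenever there is a directed path from `u` to `v`,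
`(u,v)` is an edge. -/
def TransClosed (G : Episode α) : Prop :=
  ∀ ⦃u v : ℕ⦄, Relation.TransGen G.edge u v → G.edge u v

/-- Acyclic: no directed cycles. -/
def Acyclic (G : Episode α) : Prop := ∀ v : ℕ, ¬ Relation.TransGen G.edge v v

/-- Strict: any two distinct nodes sharing the same label are joined by a
directed path. -/
def Strict (G : Episode α) : Prop :=
  ∀ u ∈ G.nodes, ∀ v ∈ G.nodes, u ≠ v → G.lab u = G.lab v →
    Relation.TransGen G.edge u v ∨ Relation.TransGen G.edge v u

/-- The class `𝒮` of strict, transitively closed (acyclic) episodes. -/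
def inS (G : Episode α) : Prop := G.Acyclic ∧ G.TransClosed ∧ G.Strict

/-- A sequence `s` covers an episode `G`: there is an injective map from the
nodes of `G` to indices of `s` matching labels and respecting edges. -/
def Covers (s : List α) (G : Episode α) : Prop :=
  ∃ f : {v // v ∈ G.nodes} → Fin s.length,
    Function.Injective f ∧ (∀ v, s.get (f v) = G.lab v.1) ∧
      ∀ u v, G.edge u.1 v.1 → f u < f v

/-- `f` witnesses that `s` is an instance of `G`: a bijective valid mapping. -/
def IsInstanceMap (s : List α) (G : Episode α)
    (f : {v // v ∈ G.nodes} → Fin s.length) : Prop :=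
  Function.Bijective f ∧ (∀ v, s.get (f v) = G.lab v.1) ∧
    ∀ u v, G.edge u.1 v.1 → f u < f v

/-- The subgraph of `H` induced on a set `U` of nodes. -/
def restrict (H : Episode α) (U : Finset ℕ) : Episode α where
  nodes := U
  edge := fun x y => x ∈ U ∧ y ∈ U ∧ H.edge x y
  lab := H.lab
  edge_mem := by rintro x y ⟨h1, h2, -⟩; exact ⟨h1, h2⟩

/-- `G ⪯ H`: `G` is a subepisode of `H`.  There is a subgraph of `H` with as
many nodes as `G` such that every sequence covering that subgraph covers `G`. -/
def Subep (G H : Episode α) : Prop :=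
  ∃ U : Finset ℕ, U ⊆ H.nodes ∧ U.card = G.nodes.card ∧
    ∀ s : List α, Covers s (H.restrict U) → Covers s G

/-- `G ≺ H`: proper subepisode. -/
def ProperSubep (G H : Episode α) : Prop := Subep G H ∧ ¬ Subep H G

/-- `G ∼ H`: every sequence covers `G` iff it covers `H`. -/
def Equivalent (G H : Episode α) : Prop := ∀ s : List α, Covers s G ↔ Covers s H

/-- The nodes of `G` are `0, …, card − 1` listed in the canonical order:
labels increase, and nodes with equal labels are ordered by the edges. -/
def CanonicallyIndexed [LinearOrder α] (G : Episode α) : Prop :=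
  G.nodes = Finset.range G.nodes.card ∧
    ∀ u ∈ G.nodes, ∀ v ∈ G.nodes, u < v →
      G.lab u < G.lab v ∨ (G.lab u = G.lab v ∧ G.edge u v)

/-- An occurrence (instance) of `G` inside `s` whose span is smaller than the
window size `ρ`: an injective valid mapping with `max f − min f < ρ`. -/
def IsOcc (s : List α) (ρ : ℕ) (G : Episode α)
    (f : {v // v ∈ G.nodes} → Fin s.length) : Prop :=
  Function.Injective f ∧ (∀ v, s.get (f v) = G.lab v.1) ∧
    (∀ u v, G.edge u.1 v.1 → f u < f v) ∧
    ∀ u v, (f u : ℕ) < (f v : ℕ) + ρ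

/-- `G` occurs in `s` within some window of length at most `ρ`. -/
def Occurs (s : List α) (ρ : ℕ) (G : Episode α) : Prop := ∃ f, IsOcc s ρ G f

/-- The symbol `x` occurs in `s` inside the interval `[min f, max f]` of an
occurrence `f`. -/
def SymInWindow (s : List α) {G : Episode α}
    (f : {v // v ∈ G.nodes} → Fin s.length) (x : α) : Prop :=
  ∃ i : Fin s.length, s.get i = x ∧ (∃ u, f u ≤ i) ∧ ∃ v, i ≤ f v

/-- The node closure `cl_N`: augment `G` with one new isolated node labelled
`x` for each symbol `x` of `s`, not labelling a node of `G`, that occurs inside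
the interval of every occurrence of `G` (with span `< ρ`). -/
noncomputable def clN [LinearOrder α] (s : List α) (ρ : ℕ) (G : Episode α) :
    Episode α :=
  let newLabs : List α := (s.toFinset.filter
      (fun x => (∀ f, IsOcc s ρ G f → SymInWindow s f x) ∧
        ∀ v ∈ G.nodes, G.lab v ≠ x)).sort (· ≤ ·)
  let base : ℕ := G.nodes.sup id + 1
  { nodes := G.nodes ∪ (Finset.range newLabs.length).image (fun i => base + i)
    edge := G.edge
    lab := fun v =>
      if h : base ≤ v ∧ v - base < newLabs.length ∧ v ∉ G.nodes then
        newLabs.get ⟨v - base, h.2.1⟩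
      else G.lab v
    edge_mem := by
      intro x y h
      exact ⟨Finset.mem_union_left _ (G.edge_mem h).1,
        Finset.mem_union_left _ (G.edge_mem h).2⟩ }

/-- The edge closure `cl_E`: the maximal episode covered by all instances of
`G` in `s` with span `< ρ`; it has an edge `(x,y)` whenever the (unique) valid
mapping of every such instance places `x` before `y`. -/
def clE (s : List α) (ρ : ℕ) (G : Episode α) : Episode α where
  nodes := G.nodes
  edge := fun x y => ∃ (hx : x ∈ G.nodes) (hy : y ∈ G.nodes),
    ∀ f, IsOcc s ρ G f → f ⟨x, hx⟩ < f ⟨y, hy⟩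
  lab := G.lab
  edge_mem := by rintro x y ⟨hx, hy, -⟩; exact ⟨hx, hy⟩

/-- The `i`-closure `icl(G) = cl_E(cl_N(G))`. -/
noncomputable def icl [LinearOrder α] (s : List α) (ρ : ℕ) (G : Episode α) :
    Episode α :=
  clE s ρ (clN s ρ G)

/-- The window `s[a, b]` (0-based, inclusive endpoints). -/
def window (s : List α) (a b : ℕ) : List α := (s.take (b + 1)).drop a

/-- `s[a,b]` is a minimal window of `G` in `s`: it covers `G` and no proper
subwindow of it covers `G`. -/
def IsMinimalWindow (s : List α) (G : Episode α) (a b : ℕ) : Prop :=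
  a ≤ b ∧ b < s.length ∧ Covers (window s a b) G ∧
    ∀ a' b', a ≤ a' → b' ≤ b → a' ≤ b' → (a', b') ≠ (a, b) →
      ¬ Covers (window s a' b') G

/-- Fixed-window frequency: the number of windows of length `ρ` (indexed by
their right endpoints, windows may stick out of the sequence) covering `G`. -/
noncomputable def freqF (s : List α) (ρ : ℕ) (G : Episode α) : ℕ :=
  ((Finset.range (s.length + ρ - 1)).filter
    (fun b => Covers (window s (b + 1 - ρ) b) G)).card

/-- Disjoint-window frequency: the maximal number of pairwise disjoint
intervals of length at most `ρ` whose windows cover `G`. -/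
noncomputable def freqD (s : List α) (ρ : ℕ) (G : Episode α) : ℕ :=
  sSup {n : ℕ | ∃ I : Fin n → ℕ × ℕ,
    (∀ i, (I i).1 ≤ (I i).2 ∧ (I i).2 < (I i).1 + ρ ∧ (I i).2 < s.length ∧
      Covers (window s (I i).1 (I i).2) G) ∧
    ∀ i j, i ≠ j → (I i).2 < (I j).1 ∨ (I j).2 < (I i).1}

/-- `G` is f-closed w.r.t. the fixed-window frequency. -/
noncomputable def FClosedF (s : List α) (ρ : ℕ) (G : Episode α) : Prop :=
  ¬ ∃ H : Episode α, inS H ∧ ProperSubep G H ∧ freqF s ρ H = freqF s ρ G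

/-- `G` is f-closed w.r.t. the disjoint-window frequency. -/
noncomputable def FClosedD (s : List α) (ρ : ℕ) (G : Episode α) : Prop :=
  ¬ ∃ H : Episode α, inS H ∧ ProperSubep G H ∧ freqD s ρ H = freqD s ρ G

/-- `G − e`: remove an edge. -/
def eraseEdge (G : Episode α) (e : ℕ × ℕ) : Episode α where
  nodes := G.nodes
  edge := fun x y => G.edge x y ∧ (x, y) ≠ e
  lab := G.lab
  edge_mem := by rintro x y ⟨h, -⟩; exact G.edge_mem h

/-- `G − v`: remove a node together with all incident edges. -/
def eraseNode (G : Episode α) (w : ℕ) : Episode α where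
  nodes := G.nodes.erase w
  edge := fun x y => G.edge x y ∧ x ≠ w ∧ y ≠ w
  lab := G.lab
  edge_mem := by
    rintro x y ⟨h, hx, hy⟩
    exact ⟨Finset.mem_erase.mpr ⟨hx, (G.edge_mem h).1⟩,
      Finset.mem_erase.mpr ⟨hy, (G.edge_mem h).2⟩⟩

/-- `G + e`: add an edge. -/
def addEdge (G : Episode α) (e : ℕ × ℕ) : Episode α where
  nodes := G.nodes ∪ {e.1, e.2}
  edge := fun x y => G.edge x y ∨ (x, y) = e
  lab := G.lab
  edge_mem := by
    rintro x y (h | h)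
    · exact ⟨Finset.mem_union_left _ (G.edge_mem h).1,
        Finset.mem_union_left _ (G.edge_mem h).2⟩
    · cases h
      exact ⟨Finset.mem_union_right _ (by simp), Finset.mem_union_right _ (by simp)⟩

/-- A skeleton edge: an edge `(v,w)` such that there is no two-step path
`v → u → w`. -/
def IsSkeletonEdge (G : Episode α) (e : ℕ × ℕ) : Prop :=
  G.edge e.1 e.2 ∧ ¬ ∃ u, G.edge e.1 u ∧ G.edge u e.2

/-- A proper skeleton edge: a skeleton edge whose endpoints carry different
labels. -/
def IsProperSkeletonEdge (G : Episode α) (e : ℕ × ℕ) : Prop :=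
  IsSkeletonEdge G e ∧ G.lab e.1 ≠ G.lab e.2

/-- The set of edges of `G`, as a set of pairs. -/
def edgeSet (G : Episode α) : Set (ℕ × ℕ) := {p | G.edge p.1 p.2}

/-- Lexicographic order on edges (using the canonical order of the nodes). -/
def edgeLT (e f : ℕ × ℕ) : Prop := e.1 < f.1 ∨ (e.1 = f.1 ∧ e.2 < f.2)

/-- `e` is the last (lexicographically largest) proper skeleton edge of `G`. -/
def IsLastEdge (G : Episode α) (e : ℕ × ℕ) : Prop :=
  IsProperSkeletonEdge G e ∧
    ∀ f, IsProperSkeletonEdge G f → f = e ∨ edgeLT f e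

/-- A solitary node: a node with no incident edges. -/
def Solitary (G : Episode α) (v : ℕ) : Prop :=
  v ∈ G.nodes ∧ ∀ u, ¬ G.edge u v ∧ ¬ G.edge v u

/-- A source node: a node with no incoming edges. -/
def IsSource (G : Episode α) (v : ℕ) : Prop := v ∈ G.nodes ∧ ∀ u, ¬ G.edge u v

/-- A proper skeleton edge `e` of `G` is derivable if `G ⪯ icl(G − e)`. -/
noncomputable def DerivableEdge [LinearOrder α] (s : List α) (ρ : ℕ)
    (G : Episode α) (e : ℕ × ℕ) : Prop :=
  IsProperSkeletonEdge G e ∧ Subep G (icl s ρ (G.eraseEdge e))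

/-- A solitary node `v` of `G` is derivable if `G ⪯ icl(G − v)`. -/
noncomputable def DerivableNode [LinearOrder α] (s : List α) (ρ : ℕ)
    (G : Episode α) (v : ℕ) : Prop :=
  Solitary G v ∧ Subep G (icl s ρ (G.eraseNode v))

/-- `GreedyFrom s t G f`: `f` is the greedy mapping of `G` in the suffix of `s`
starting at (0-based) position `t`, recording absolute indices of `s`:
repeatedly map the source node of `G` whose label has the earliest remaining
occurrence to that position, and recurse on the episode with that node
removed and the part of the sequence after that position. -/
inductive GreedyFrom (s : List α) : ℕ → Episode α → (ℕ → ℕ) → Prop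
  | empty (t : ℕ) (G : Episode α) (f : ℕ → ℕ) (hG : G.nodes = ∅) :
      GreedyFrom s t G f
  | step (t : ℕ) (G : Episode α) (f : ℕ → ℕ) (v k : ℕ)
      (hv : G.IsSource v) (ht : t ≤ k) (hk : k < s.length)
      (hlab : s.get ⟨k, hk⟩ = G.lab v)
      (hmin : ∀ j (hj : j < s.length), t ≤ j → j < k →
        ¬ ∃ w, G.IsSource w ∧ s.get ⟨j, hj⟩ = G.lab w)
      (hfv : f v = k)
      (hrec : GreedyFrom s (k + 1) (G.eraseNode v) f) :
      GreedyFrom s t G f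

/-- One step of removing a derivable proper skeleton edge or a derivable
solitary node. -/
noncomputable def RemStep [LinearOrder α] (s : List α) (ρ : ℕ) :
    Episode α → Episode α → Prop := fun G G' =>
  (∃ e, DerivableEdge s ρ G e ∧ G' = G.eraseEdge e) ∨
  (∃ v, DerivableNode s ρ G v ∧ G' = G.eraseNode v)

end Episode

/-!
Edge `e = (v, w)`: if an occurrence of `cl_N(G − e)` put `w` before `v`, the sequence listing the
nodes of `cl_N(G − e)` in that order would cover `icl(G − e)`, hence `G`. The nodes of one label
form a chain in `G` and the new nodes carry other labels, so this covering of `G` must map every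
node to its own place in the listing, and then it violates `e`. Hence every occurrence of
`cl_N(G − e)` respects `e`: removing `e` changes neither the occurrences nor the node closure, and
the edge closure restores `e`.

Solitary node `v`: by derivability every occurrence of `G − v` contains an occurrence of `G` within
its interval. So `cl_N(G − v)` adds the label of `v` (unique in `G` by strictness) together with
all labels that `cl_N(G)` adds, and `cl_N(G)`, `cl_N(G − v)` embed into each other preserving
labels and edges, which the edge closure respects.
-/

theorem exists_list_of_injective {α ι β : Type*} [Fintype ι] [LinearOrder β] (lab : ι → α)
    {f : ι → β} (hf : Function.Injective f) :
    ∃ (t : List α) (pos : ι → Fin t.length), Function.Bijective pos ∧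
      (∀ i, t.get (pos i) = lab i) ∧ ∀ i j, f i < f j → pos i < pos j := by
  let : LinearOrder ι := LinearOrder.lift' f hf
  let e := (Fintype.orderIsoFinOfCardEq ι rfl).symm
  refine ⟨List.ofFn (lab ∘ e.symm), fun i => finCongr List.length_ofFn.symm (e i),
    (finCongr _).bijective.comp e.bijective, fun i => by simp, fun i j hij => ?_⟩
  simpa using e.lt_iff_lt.2 hij

theorem eq_of_range_subset_of_lt_imp_lt {β γ : Type*} [Finite β] [LinearOrder γ]
    {u₁ u₂ : β → γ} (h₁ : Function.Injective u₁) (h₁₂ : ∀ x y, u₁ x < u₁ y → u₂ x < u₂ y)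
    (hsub : Set.range u₂ ⊆ Set.range u₁) : u₁ = u₂ := by
  let : LinearOrder β := LinearOrder.lift' u₁ h₁
  have hs₁ : StrictMono u₁ := fun _ _ h => h
  have hs₂ : StrictMono u₂ := fun x y h => h₁₂ x y h
  refine (hs₁.range_inj hs₂).1 (Set.eq_of_subset_of_ncard_le hsub ?_).symm
  rw [Set.ncard_range_of_injective h₁, Set.ncard_range_of_injective hs₂.injective]

namespace Episode

variable {α : Type*}

theorem ext {G H : Episode α} (hn : G.nodes = H.nodes) (he : G.edge = H.edge)
    (hl : G.lab = H.lab) : G = H := by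
  cases G; cases H; cases hn; cases he; cases hl; rfl

structure Embedding (A B : Episode α) where
  toFun : {x // x ∈ A.nodes} → {y // y ∈ B.nodes}
  injective : Function.Injective toFun
  lab_toFun : ∀ x, B.lab (toFun x) = A.lab x
  edge_toFun : ∀ x y : {x // x ∈ A.nodes}, A.edge x y → B.edge (toFun x) (toFun y)

namespace Embedding

variable {A B : Episode α}

def ofSubset (hsub : A.nodes ⊆ B.nodes) (hlab : ∀ x ∈ A.nodes, B.lab x = A.lab x)
    (hedge : ∀ x y, A.edge x y → B.edge x y) : Embedding A B where
  toFun x := ⟨x, hsub x.2⟩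
  injective _ _ h := Subtype.ext (congrArg Subtype.val h :)
  lab_toFun x := hlab x x.2
  edge_toFun x y := hedge x y

/-- Nodes of `C` go to themselves, every other node to a node outside `C` with the same label. -/
theorem nonempty_of_core {C : Finset ℕ} (hCB : C ⊆ B.nodes)
    (hlab : ∀ x ∈ C, B.lab x = A.lab x) (hedge : ∀ x y, A.edge x y → x ∈ C ∧ y ∈ C ∧ B.edge x y)
    (hinj : Set.InjOn A.lab ↑(A.nodes \ C))
    (hsub : A.lab '' ↑(A.nodes \ C) ⊆ B.lab '' ↑(B.nodes \ C)) : Nonempty (Embedding A B) := by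
  have hout : ∀ x : {x // x ∈ A.nodes}, x.1 ∉ C →
      ∃ y : {y // y ∈ B.nodes}, y.1 ∉ C ∧ B.lab y = A.lab x := by
    intro x hx
    obtain ⟨y, hy, hyx⟩ := hsub ⟨x, by simp [hx], rfl⟩
    simp only [Finset.coe_sdiff, Set.mem_sdiff, Finset.mem_coe] at hy
    exact ⟨⟨y, hy.1⟩, hy.2, hyx⟩
  choose out hout_notMem hout_lab using hout
  let φ : {x // x ∈ A.nodes} → {y // y ∈ B.nodes} := fun x =>
    if hx : x.1 ∈ C then ⟨x, hCB hx⟩ else out x hx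
  have hφ_core : ∀ x (hx : x.1 ∈ C), φ x = ⟨x, hCB hx⟩ := fun x hx => dif_pos hx
  have hφ_out : ∀ x (hx : x.1 ∉ C), φ x = out x hx := fun x hx => dif_neg hx
  have hφ_lab : ∀ x, B.lab (φ x) = A.lab x := by
    intro x
    by_cases hx : x.1 ∈ C
    · rw [hφ_core x hx]; exact hlab x hx
    · rw [hφ_out x hx]; exact hout_lab x hx
  refine ⟨⟨φ, fun x y hxy => ?_, hφ_lab, fun x y h => ?_⟩⟩
  · by_cases hx : x.1 ∈ C <;> by_cases hy : y.1 ∈ C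
    · rw [hφ_core x hx, hφ_core y hy] at hxy
      exact Subtype.ext (congrArg Subtype.val hxy :)
    · rw [hφ_core x hx, hφ_out y hy] at hxy
      exact absurd (hxy ▸ hx) (hout_notMem y hy)
    · rw [hφ_out x hx, hφ_core y hy] at hxy
      exact absurd (hxy ▸ hy) (hout_notMem x hx)
    · have hl := hφ_lab x
      rw [hxy, hφ_lab y] at hl
      exact Subtype.ext (hinj (by simp [hx]) (by simp [hy]) hl.symm)
  · obtain ⟨hx, hy, hB⟩ := hedge x y h
    rw [hφ_core x hx, hφ_core y hy]
    exact hB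

end Embedding

theorem Covers.of_embedding {A B : Episode α} {t : List α} (φ : Embedding A B)
    (h : Covers t B) : Covers t A := by
  obtain ⟨F, hinj, hlab, hedge⟩ := h
  exact ⟨F ∘ φ.toFun, hinj.comp φ.injective, fun x => (hlab _).trans (φ.lab_toFun x),
    fun x y h => hedge _ _ (φ.edge_toFun x y h)⟩

section Occurrence

variable {s : List α} {ρ : ℕ}

theorem IsOcc.comp {A B : Episode α} {f : {y // y ∈ B.nodes} → Fin s.length}
    (hf : IsOcc s ρ B f) (φ : Embedding A B) : IsOcc s ρ A (f ∘ φ.toFun) :=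
  ⟨hf.1.comp φ.injective, fun x => (hf.2.1 _).trans (φ.lab_toFun x),
    fun x y h => hf.2.2.1 _ _ (φ.edge_toFun x y h), fun _ _ => hf.2.2.2 _ _⟩

theorem IsOcc.clE {H : Episode α} {f : {y // y ∈ H.nodes} → Fin s.length}
    (hf : IsOcc s ρ H f) : IsOcc s ρ (clE s ρ H) f :=
  ⟨hf.1, hf.2.1, fun _ _ ⟨_, _, h⟩ => h f hf, hf.2.2.2⟩

protected def Embedding.clE {A B : Episode α} (φ : Embedding A B) :
    Embedding (clE s ρ A) (clE s ρ B) where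
  toFun := φ.toFun
  injective := φ.injective
  lab_toFun := φ.lab_toFun
  edge_toFun _ _ := fun ⟨_, _, h⟩ => ⟨Subtype.prop _, Subtype.prop _, fun _ hg => h _ (hg.comp φ)⟩

theorem not_covers_clE {K : Episode α} {t : List α} (hK : K.nodes.Nonempty)
    (h : ¬ Occurs s ρ K) : ¬ Covers t (clE s ρ K) := by
  rintro ⟨F, -, -, hF⟩
  obtain ⟨x, hx⟩ := hK
  exact lt_irrefl _ (hF ⟨x, hx⟩ ⟨x, hx⟩ ⟨hx, hx, fun f hf => (h ⟨f, hf⟩).elim⟩)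

end Occurrence

def InSpan {ι κ : Type*} {n : ℕ} (g : ι → Fin n) (f : κ → Fin n) : Prop :=
  ∀ i, ∃ a b, f a ≤ g i ∧ g i ≤ f b

section InSpan

variable {ι κ μ : Type*} {n : ℕ} {g : ι → Fin n} {f : κ → Fin n}

theorem InSpan.trans {h : μ → Fin n} (hgf : InSpan g f) (hfh : InSpan f h) : InSpan g h := by
  intro i
  obtain ⟨a, b, ha, hb⟩ := hgf i
  obtain ⟨a', -, ha', -⟩ := hfh a
  obtain ⟨-, b', -, hb'⟩ := hfh b
  exact ⟨a', b', ha'.trans ha, hb.trans hb'⟩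

theorem inSpan_comp (φ : ι → κ) : InSpan (f ∘ φ) f := fun i => ⟨φ i, φ i, le_rfl, le_rfl⟩

theorem InSpan.lt_add {ρ : ℕ} (hgf : InSpan g f) (hf : ∀ a b, (f a : ℕ) < f b + ρ) :
    ∀ i j, (g i : ℕ) < g j + ρ := by
  intro i j
  obtain ⟨-, b, -, hb⟩ := hgf i
  obtain ⟨a, -, ha, -⟩ := hgf j
  have := hf b a
  have : (g i : ℕ) ≤ f b := hb
  have : (f a : ℕ) ≤ g j := ha
  omega

theorem InSpan.symInWindow {s : List α} {G H : Episode α} {g : {v // v ∈ G.nodes} → Fin s.length}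
    {f : {v // v ∈ H.nodes} → Fin s.length} (hgf : InSpan g f) {x : α}
    (hx : SymInWindow s g x) : SymInWindow s f x := by
  obtain ⟨i, hi, ⟨u, hu⟩, ⟨v, hv⟩⟩ := hx
  obtain ⟨a, -, ha, -⟩ := hgf u
  obtain ⟨-, b, -, hb⟩ := hgf v
  exact ⟨i, hi, ⟨a, ha.trans hu⟩, ⟨b, hv.trans hb⟩⟩

end InSpan

theorem length_window {s : List α} {a b : ℕ} (hb : b < s.length) :
    (window s a b).length = b + 1 - a := by
  simp only [window, List.length_drop, List.length_take]
  omega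

theorem getElem_window {s : List α} {a b i : ℕ} (hi : i < (window s a b).length) :
    (window s a b)[i] = s[a + i]'(by simp [window] at hi; omega) := by
  simp [window, List.getElem_drop, List.getElem_take]

theorem covers_window_iff {s : List α} {a b : ℕ} (hb : b < s.length)
    {X : Episode α} :
    Covers (window s a b) X ↔ ∃ g : {v // v ∈ X.nodes} → Fin s.length,
      Function.Injective g ∧ (∀ v, s.get (g v) = X.lab v) ∧
      (∀ u v : {v // v ∈ X.nodes}, X.edge u v → g u < g v) ∧ ∀ v, a ≤ g v ∧ g v ≤ b := by
  have hlen := length_window (a := a) hb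
  constructor
  · rintro ⟨F, hinj, hlab, hedge⟩
    have hF : ∀ v, a + F v < s.length := fun v => by have := (F v).2; omega
    refine ⟨fun v => ⟨a + F v, hF v⟩, fun u v h => hinj (Fin.ext ?_), fun v => ?_,
      fun u v h => ?_, fun v => ⟨Nat.le_add_right _ _, ?_⟩⟩
    · simpa using congrArg Fin.val h
    · rw [← hlab v]; simp [getElem_window]
    · have := hedge u v h; rw [Fin.lt_def] at this ⊢; simp only; omega
    · have := (F v).2; simp only; omega
  · rintro ⟨g, hinj, hlab, hedge, hg_mem⟩
    have hg : ∀ v, g v - a < (window s a b).length := fun v => by have := hg_mem v; omega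
    refine ⟨fun v => ⟨g v - a, hg v⟩, fun u v h => hinj (Fin.ext ?_), fun v => ?_,
      fun u v h => ?_⟩
    · have := congrArg Fin.val h; have := hg_mem u; have := hg_mem v; simp only at *; omega
    · rw [← hlab v]; simp only [List.get_eq_getElem, getElem_window]
      congr 2; have := hg_mem v; omega
    · have hlt := hedge u v h; have := hg_mem u
      rw [Fin.lt_def] at hlt ⊢; simp only; omega

theorem Subep.exists_isOcc_inSpan {s : List α} {ρ : ℕ} {G K : Episode α} (hGK : Subep G K)
    {f : {v // v ∈ K.nodes} → Fin s.length} (hf : IsOcc s ρ K f) :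
    ∃ g, IsOcc s ρ G g ∧ InSpan g f := by
  obtain ⟨U, hUK, hcard, hcov⟩ := hGK
  rcases U.eq_empty_or_nonempty with rfl | ⟨u₀, hu₀⟩
  · have : IsEmpty {v // v ∈ G.nodes} := by
      rw [Finset.card_empty, eq_comm, Finset.card_eq_zero] at hcard
      simp [hcard, Subtype.isEmpty_false]
    exact ⟨isEmptyElim, ⟨isEmptyElim, isEmptyElim, isEmptyElim, isEmptyElim⟩, isEmptyElim⟩
  let incl : Embedding (K.restrict U) K := .ofSubset hUK (fun _ _ => rfl) (fun _ _ h => h.2.2)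
  have hfU := hf.comp incl
  have : Nonempty {v // v ∈ (K.restrict U).nodes} := ⟨⟨u₀, hu₀⟩⟩
  obtain ⟨ua, hua⟩ := Finite.exists_min (f ∘ incl.toFun)
  obtain ⟨ub, hub⟩ := Finite.exists_max (f ∘ incl.toFun)
  obtain ⟨g, hinj, hlab, hedge, hspan⟩ := (covers_window_iff (f (incl.toFun ub)).2).1 <|
    hcov _ <| (covers_window_iff (f (incl.toFun ub)).2).2
      ⟨f ∘ incl.toFun, hfU.1, hfU.2.1, hfU.2.2.1, fun v => ⟨hua v, hub v⟩⟩
  have hgf : InSpan g f := fun x => ⟨incl.toFun ua, incl.toFun ub, (hspan x).1, (hspan x).2⟩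
  exact ⟨g, ⟨hinj, hlab, hedge, hgf.lt_add hf.2.2.2⟩, hgf⟩

theorem sup_add_notMem (H : Episode α) (i : ℕ) : H.nodes.sup id + 1 + i ∉ H.nodes := fun hi => by
  have := Finset.le_sup (f := id) hi
  simp only [id] at this
  omega

section Closure

noncomputable def newLabels [DecidableEq α] (s : List α) (ρ : ℕ) (H : Episode α) : Finset α :=
  s.toFinset.filter (fun x => (∀ f, IsOcc s ρ H f → SymInWindow s f x) ∧
    ∀ v ∈ H.nodes, H.lab v ≠ x)

theorem mem_newLabels [DecidableEq α] {s : List α} {ρ : ℕ} {H : Episode α} {x : α} :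
    x ∈ newLabels s ρ H ↔ x ∈ s ∧ (∀ f, IsOcc s ρ H f → SymInWindow s f x) ∧
      ∀ v ∈ H.nodes, H.lab v ≠ x := by
  simp [newLabels]

variable [LinearOrder α]

/-- The construction of `clN` with the set `L` of added labels as a parameter. -/
def addNodes (H : Episode α) (L : Finset α) : Episode α :=
  let newLabs : List α := L.sort (· ≤ ·)
  let base : ℕ := H.nodes.sup id + 1
  { nodes := H.nodes ∪ (Finset.range newLabs.length).image (fun i => base + i)
    edge := H.edge
    lab := fun v =>
      if h : base ≤ v ∧ v - base < newLabs.length ∧ v ∉ H.nodes then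
        newLabs.get ⟨v - base, h.2.1⟩
      else H.lab v
    edge_mem := by
      intro x y h
      exact ⟨Finset.mem_union_left _ (H.edge_mem h).1,
        Finset.mem_union_left _ (H.edge_mem h).2⟩ }

theorem clN_eq_addNodes (s : List α) (ρ : ℕ) (H : Episode α) :
    clN s ρ H = H.addNodes (newLabels s ρ H) := rfl

variable {H : Episode α} {L : Finset α}

theorem subset_addNodes : H.nodes ⊆ (H.addNodes L).nodes := Finset.subset_union_left

theorem addNodes_lab_of_mem {x : ℕ} (hx : x ∈ H.nodes) : (H.addNodes L).lab x = H.lab x :=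
  dif_neg (by tauto)

theorem addNodes_nodes_sdiff : (H.addNodes L).nodes \ H.nodes =
    (Finset.range (L.sort (· ≤ ·)).length).image (fun i => H.nodes.sup id + 1 + i) := by
  ext x
  simp only [addNodes, Finset.mem_sdiff, Finset.mem_union, Finset.mem_image, Finset.mem_range]
  constructor
  · rintro ⟨h | h, hx⟩
    · exact absurd h hx
    · exact h
  · rintro ⟨i, hi, rfl⟩
    exact ⟨Or.inr ⟨i, hi, rfl⟩, sup_add_notMem H i⟩

theorem addNodes_lab_new {i : ℕ} (hi : i < (L.sort (· ≤ ·)).length) :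
    (H.addNodes L).lab (H.nodes.sup id + 1 + i) = (L.sort (· ≤ ·))[i] := by
  simp only [addNodes]
  rw [dif_pos ⟨Nat.le_add_right _ _, by simpa using hi, sup_add_notMem H i⟩]
  simp

theorem addNodes_lab_image : (H.addNodes L).lab '' ↑((H.addNodes L).nodes \ H.nodes) = ↑L := by
  ext x
  simp only [addNodes_nodes_sdiff, Finset.coe_image, Finset.coe_range, Set.image_image,
    Set.mem_image, Set.mem_Iio, Finset.mem_coe]
  constructor
  · rintro ⟨i, hi, rfl⟩
    rw [addNodes_lab_new hi, ← Finset.mem_sort (· ≤ ·)]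
    exact List.getElem_mem hi
  · intro hx
    obtain ⟨i, hi, rfl⟩ := List.getElem_of_mem ((Finset.mem_sort (· ≤ ·)).2 hx)
    exact ⟨i, hi, addNodes_lab_new hi⟩

theorem addNodes_lab_injOn : Set.InjOn (H.addNodes L).lab ↑((H.addNodes L).nodes \ H.nodes) := by
  rw [addNodes_nodes_sdiff, Finset.coe_image]
  rintro _ ⟨i, hi, rfl⟩ _ ⟨j, hj, rfl⟩ h
  rw [Finset.coe_range, Set.mem_Iio] at hi hj
  rw [addNodes_lab_new hi, addNodes_lab_new hj,
    (Finset.sort_nodup L (· ≤ ·)).getElem_inj_iff] at h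
  rw [h]

theorem addNodes_lab_mem {x : ℕ} (hx : x ∈ (H.addNodes L).nodes) (hx' : x ∉ H.nodes) :
    (H.addNodes L).lab x ∈ L := by
  rw [← Finset.mem_coe, ← addNodes_lab_image]
  exact ⟨x, by simp [hx, hx'], rfl⟩

theorem clN_lab_of_mem {s : List α} {ρ : ℕ} {x : ℕ} (hx : x ∈ H.nodes) :
    (clN s ρ H).lab x = H.lab x :=
  addNodes_lab_of_mem hx

theorem clN_lab_image {s : List α} {ρ : ℕ} :
    (clN s ρ H).lab '' ↑((clN s ρ H).nodes \ H.nodes) = ↑(newLabels s ρ H) :=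
  addNodes_lab_image

theorem clN_lab_injOn {s : List α} {ρ : ℕ} :
    Set.InjOn (clN s ρ H).lab ↑((clN s ρ H).nodes \ H.nodes) :=
  addNodes_lab_injOn

theorem IsOcc.exists_isOcc_clN {s : List α} {ρ : ℕ} {f : {v // v ∈ H.nodes} → Fin s.length}
    (hf : IsOcc s ρ H f) : ∃ g, IsOcc s ρ (clN s ρ H) g ∧
      (∀ x : {v // v ∈ H.nodes}, g ⟨x, subset_addNodes x.2⟩ = f x) ∧ InSpan g f := by
  have hwin : ∀ x ∈ newLabels s ρ H, SymInWindow s f x :=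
    fun x hx => (mem_newLabels.1 hx).2.1 f hf
  choose J hJ_lab hJ_lo hJ_hi using hwin
  have hnew : ∀ u : {u // u ∈ (clN s ρ H).nodes}, u.1 ∉ H.nodes →
      (clN s ρ H).lab u ∈ newLabels s ρ H := fun u hu => addNodes_lab_mem u.2 hu
  let g : {u // u ∈ (clN s ρ H).nodes} → Fin s.length := fun u =>
    if hu : u.1 ∈ H.nodes then f ⟨u, hu⟩ else J _ (hnew u hu)
  have hg_old : ∀ u (hu : u.1 ∈ H.nodes), g u = f ⟨u, hu⟩ := fun u hu => dif_pos hu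
  have hg_new : ∀ u (hu : u.1 ∉ H.nodes), g u = J _ (hnew u hu) := fun u hu => dif_neg hu
  have hg_lab : ∀ u, s.get (g u) = (clN s ρ H).lab u := by
    intro u
    by_cases hu : u.1 ∈ H.nodes
    · rw [hg_old u hu, hf.2.1, clN_lab_of_mem hu]
    · rw [hg_new u hu, hJ_lab]
  have hg_inj : Function.Injective g := by
    intro u v huv
    have hl : (clN s ρ H).lab u = (clN s ρ H).lab v := by rw [← hg_lab, ← hg_lab, huv]
    by_cases hu : u.1 ∈ H.nodes <;> by_cases hv : v.1 ∈ H.nodes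
    · rw [hg_old u hu, hg_old v hv] at huv
      exact Subtype.ext (congrArg Subtype.val (hf.1 huv) :)
    · rw [clN_lab_of_mem hu] at hl
      exact absurd hl ((mem_newLabels.1 (hnew v hv)).2.2 u hu)
    · rw [clN_lab_of_mem hv] at hl
      exact absurd hl.symm ((mem_newLabels.1 (hnew u hu)).2.2 v hv)
    · exact Subtype.ext (addNodes_lab_injOn (Finset.mem_coe.2 (Finset.mem_sdiff.2 ⟨u.2, hu⟩))
        (Finset.mem_coe.2 (Finset.mem_sdiff.2 ⟨v.2, hv⟩)) hl)
  have hg_span : InSpan g f := by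
    intro u
    by_cases hu : u.1 ∈ H.nodes
    · exact ⟨⟨u, hu⟩, ⟨u, hu⟩, (hg_old u hu).ge, (hg_old u hu).le⟩
    · rw [hg_new u hu]
      obtain ⟨a, ha⟩ := hJ_lo _ (hnew u hu)
      obtain ⟨b, hb⟩ := hJ_hi _ (hnew u hu)
      exact ⟨a, b, ha, hb⟩
  refine ⟨g, ⟨hg_inj, hg_lab, fun u v huv => ?_, hg_span.lt_add hf.2.2.2⟩,
    fun x => hg_old _ x.2, hg_span⟩
  have hu := (H.edge_mem huv).1
  have hv := (H.edge_mem huv).2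
  rw [hg_old u hu, hg_old v hv]
  exact hf.2.2.1 _ _ huv

end Closure

/-- In a strict transitively closed episode the nodes of one label form a chain, so a map
respecting the edges inside each label class is determined by the positions it uses. -/
theorem Strict.eq_of_range_subset {G : Episode α} (hS : G.Strict) (hT : G.TransClosed)
    {t : List α} {p q : {v // v ∈ G.nodes} → Fin t.length} (hp : Function.Injective p)
    (hpl : ∀ v, t.get (p v) = G.lab v) (hql : ∀ v, t.get (q v) = G.lab v)
    (hpe : ∀ u v : {v // v ∈ G.nodes}, G.lab u = G.lab v → G.edge u v → p u < p v)
    (hqe : ∀ u v : {v // v ∈ G.nodes}, G.lab u = G.lab v → G.edge u v → q u < q v)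
    (hqp : Set.range q ⊆ Set.range p) : p = q := by
  funext x
  let β := {u : {v // v ∈ G.nodes} // G.lab u = G.lab x}
  have hchain : ∀ a b : β, a ≠ b → G.edge a b ∨ G.edge b a := fun a b hab =>
    (hS _ a.1.2 _ b.1.2 (fun h => hab (Subtype.ext (Subtype.ext h))) (a.2.trans b.2.symm)).imp
      (fun h => hT h) (fun h => hT h)
  have key : (fun a : β => p a.1) = fun a => q a.1 := by
    refine eq_of_range_subset_of_lt_imp_lt (hp.comp Subtype.val_injective) (fun a b hab => ?_) ?_
    · rcases hchain a b (ne_of_apply_ne (fun c : β => p c.1) hab.ne) with h | h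
      · exact hqe _ _ (a.2.trans b.2.symm) h
      · exact absurd (hpe _ _ (b.2.trans a.2.symm) h) (not_lt.2 hab.le)
    · rintro _ ⟨a, rfl⟩
      obtain ⟨b, hb⟩ := hqp ⟨a, rfl⟩
      refine ⟨⟨b, ?_⟩, hb⟩
      have hlab := hpl b
      rw [hb, hql] at hlab
      exact hlab.symm.trans a.2
  exact congrFun key ⟨x, rfl⟩

section EdgeRemoval

variable {s : List α} {ρ : ℕ}

theorem isOcc_iff_isOcc_eraseEdge {H : Episode α} {e : ℕ × ℕ}
    (h : ∀ f, IsOcc s ρ (H.eraseEdge e) f →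
      ∀ (h₁ : e.1 ∈ H.nodes) (h₂ : e.2 ∈ H.nodes), f ⟨e.1, h₁⟩ < f ⟨e.2, h₂⟩)
    (f : {v // v ∈ H.nodes} → Fin s.length) :
    IsOcc s ρ H f ↔ IsOcc s ρ (H.eraseEdge e) f := by
  refine ⟨fun hf => ⟨hf.1, hf.2.1, fun u v huv => hf.2.2.1 u v huv.1, hf.2.2.2⟩,
    fun hf => ⟨hf.1, hf.2.1, fun u v huv => ?_, hf.2.2.2⟩⟩
  by_cases he : (u.1, v.1) = e
  · subst he
    exact h f hf u.2 v.2
  · exact hf.2.2.1 u v ⟨huv, he⟩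

theorem clE_eraseEdge {H : Episode α} {e : ℕ × ℕ}
    (h : ∀ f, IsOcc s ρ (H.eraseEdge e) f →
      ∀ (h₁ : e.1 ∈ H.nodes) (h₂ : e.2 ∈ H.nodes), f ⟨e.1, h₁⟩ < f ⟨e.2, h₂⟩) :
    clE s ρ (H.eraseEdge e) = clE s ρ H := by
  refine ext rfl ?_ rfl
  funext x y
  exact propext <| exists_congr fun _ => exists_congr fun _ => forall_congr' fun f =>
    imp_congr_left (isOcc_iff_isOcc_eraseEdge h f).symm

variable [LinearOrder α]

theorem clN_eraseEdge {H : Episode α} {e : ℕ × ℕ}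
    (h : ∀ f, IsOcc s ρ H f ↔ IsOcc s ρ (H.eraseEdge e) f) :
    clN s ρ (H.eraseEdge e) = (clN s ρ H).eraseEdge e := by
  have : newLabels s ρ (H.eraseEdge e) = newLabels s ρ H := by
    ext x
    simp only [mem_newLabels]
    exact and_congr_right' (and_congr_left' (forall_congr' fun f => imp_congr_left (h f).symm))
  rw [clN_eq_addNodes, this]
  rfl

theorem DerivableEdge.lt_of_isOcc {G : Episode α} (hG : inS G) {e : ℕ × ℕ}
    (hD : DerivableEdge s ρ G e) {f : {v // v ∈ (clN s ρ (G.eraseEdge e)).nodes} → Fin s.length}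
    (hf : IsOcc s ρ (clN s ρ (G.eraseEdge e)) f) (h₁ : e.1 ∈ (clN s ρ (G.eraseEdge e)).nodes)
    (h₂ : e.2 ∈ (clN s ρ (G.eraseEdge e)).nodes) : f ⟨e.1, h₁⟩ < f ⟨e.2, h₂⟩ := by
  obtain ⟨⟨⟨hedge, -⟩, hlab⟩, U, hU, -, hcovU⟩ := hD
  by_contra hle
  have hlt : f ⟨e.2, h₂⟩ < f ⟨e.1, h₁⟩ := lt_of_le_of_ne (not_lt.1 hle) fun h =>
    hlab (congrArg G.lab (congrArg Subtype.val (hf.1 h) :)).symm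
  obtain ⟨t, pos, hpos, hpos_lab, hpos_lt⟩ :=
    exists_list_of_injective (fun v : {v // v ∈ (clN s ρ (G.eraseEdge e)).nodes} =>
      (clN s ρ (G.eraseEdge e)).lab v) hf.1
  have hcov : Covers t (icl s ρ (G.eraseEdge e)) :=
    ⟨pos, hpos.1, hpos_lab, fun u v ⟨_, _, huv⟩ => hpos_lt _ _ (huv f hf)⟩
  obtain ⟨q, -, hq_lab, hq_edge⟩ :=
    hcovU t (hcov.of_embedding (.ofSubset hU (fun _ _ => rfl) (fun _ _ h => h.2.2)))
  let p : {v // v ∈ G.nodes} → Fin t.length := fun v => pos ⟨v, subset_addNodes v.2⟩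
  have hpq : p = q := by
    refine hG.2.2.eq_of_range_subset hG.2.1 (hpos.1.comp fun u v h => ?_)
      (fun v => (hpos_lab _).trans (clN_lab_of_mem v.2)) hq_lab
      (fun u v huv h => hpos_lt _ _ (hf.2.2.1 _ _ ⟨h, fun he => hlab (by rw [← he]; exact huv)⟩))
      (fun u v _ h => hq_edge u v h) ?_
    · exact Subtype.ext (congrArg Subtype.val h :)
    rintro _ ⟨x, rfl⟩
    obtain ⟨a, ha⟩ := hpos.2 (q x)
    have ha_lab : (clN s ρ (G.eraseEdge e)).lab a = G.lab x := by
      rw [← hpos_lab, ha, hq_lab]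
    by_cases hax : a.1 ∈ G.nodes
    · exact ⟨⟨a, hax⟩, ha⟩
    · exact absurd ha_lab.symm ((mem_newLabels.1 (addNodes_lab_mem a.2 hax)).2.2 x x.2)
  have hvw := hq_edge ⟨e.1, (G.edge_mem hedge).1⟩ ⟨e.2, (G.edge_mem hedge).2⟩ hedge
  rw [← hpq] at hvw
  exact lt_asymm hvw (hpos_lt _ _ hlt)

theorem icl_eraseEdge {G : Episode α} (hG : inS G) {e : ℕ × ℕ} (hD : DerivableEdge s ρ G e) :
    icl s ρ G = icl s ρ (G.eraseEdge e) := by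
  have hocc : ∀ f, IsOcc s ρ G f ↔ IsOcc s ρ (G.eraseEdge e) f :=
    isOcc_iff_isOcc_eraseEdge fun f hf h₁ h₂ => by
      obtain ⟨g, hg, hgf, -⟩ := hf.exists_isOcc_clN
      have := hD.lt_of_isOcc hG hg (subset_addNodes h₁) (subset_addNodes h₂)
      rwa [hgf ⟨e.1, h₁⟩, hgf ⟨e.2, h₂⟩] at this
  have hlt : ∀ f, IsOcc s ρ (clN s ρ (G.eraseEdge e)) f → ∀ h₁ h₂, f ⟨e.1, h₁⟩ < f ⟨e.2, h₂⟩ :=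
    fun f hf => hD.lt_of_isOcc hG hf
  rw [clN_eraseEdge hocc] at hlt
  rw [icl, icl, clN_eraseEdge hocc, clE_eraseEdge hlt]

end EdgeRemoval

section NodeRemoval

variable {s : List α} {ρ : ℕ}

def Embedding.eraseNode (G : Episode α) (v : ℕ) : Embedding (G.eraseNode v) G :=
  .ofSubset (Finset.erase_subset _ _) (fun _ _ => rfl) (fun _ _ h => h.1)

theorem Strict.lab_ne_of_solitary {G : Episode α} (hS : G.Strict) {v : ℕ} (hv : Solitary G v)
    {u : ℕ} (hu : u ∈ G.nodes) (huv : u ≠ v) : G.lab u ≠ G.lab v := by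
  intro h
  rcases hS u hu v hv.1 huv h with h' | h'
  · obtain ⟨c, -, hc⟩ := Relation.TransGen.tail'_iff.1 h'
    exact (hv.2 c).1 hc
  · obtain ⟨c, hc, -⟩ := Relation.TransGen.head'_iff.1 h'
    exact (hv.2 c).2 hc

theorem newLabels_eraseNode_subset [DecidableEq α] (G : Episode α) (v : ℕ) :
    newLabels s ρ (G.eraseNode v) ⊆ insert (G.lab v) (newLabels s ρ G) := by
  intro x hx
  obtain ⟨hxs, hwin, hlab⟩ := mem_newLabels.1 hx
  rw [Finset.mem_insert, or_iff_not_imp_left]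
  intro hxv
  refine mem_newLabels.2 ⟨hxs, fun g hg => ?_, fun u hu => ?_⟩
  · exact (inSpan_comp _).symInWindow (hwin _ (hg.comp (Embedding.eraseNode G v)))
  · by_cases huv : u = v
    · exact huv ▸ Ne.symm hxv
    · exact hlab u (Finset.mem_erase.2 ⟨huv, hu⟩)

variable [LinearOrder α]

noncomputable def Embedding.toClN (H : Episode α) : Embedding H (clN s ρ H) :=
  .ofSubset subset_addNodes (fun _ hx => clN_lab_of_mem hx) (fun _ _ h => h)

theorem DerivableNode.exists_isOcc_inSpan {G : Episode α} {v : ℕ} (hD : DerivableNode s ρ G v)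
    {f : {u // u ∈ (G.eraseNode v).nodes} → Fin s.length} (hf : IsOcc s ρ (G.eraseNode v) f) :
    ∃ g, IsOcc s ρ G g ∧ InSpan g f := by
  obtain ⟨fh, hfh, -, hspan⟩ := hf.exists_isOcc_clN
  obtain ⟨g, hg, hspan'⟩ := hD.2.exists_isOcc_inSpan hfh.clE
  exact ⟨g, hg, hspan'.trans hspan⟩

theorem DerivableNode.newLabels_subset {G : Episode α} {v : ℕ} (hD : DerivableNode s ρ G v) :
    newLabels s ρ G ⊆ newLabels s ρ (G.eraseNode v) := by
  intro x hx
  obtain ⟨hxs, hwin, hlab⟩ := mem_newLabels.1 hx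
  refine mem_newLabels.2 ⟨hxs, fun f hf => ?_, fun u hu => hlab u (Finset.mem_of_mem_erase hu)⟩
  obtain ⟨g, hg, hgf⟩ := hD.exists_isOcc_inSpan hf
  exact hgf.symInWindow (hwin g hg)

theorem DerivableNode.lab_mem_newLabels {G : Episode α} (hS : G.Strict) {v : ℕ}
    (hD : DerivableNode s ρ G v) (hocc : Occurs s ρ (G.eraseNode v)) :
    G.lab v ∈ newLabels s ρ (G.eraseNode v) := by
  obtain ⟨f₀, hf₀⟩ := hocc
  refine mem_newLabels.2 ⟨?_, fun f hf => ?_, fun u hu =>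
    hS.lab_ne_of_solitary hD.1 (Finset.mem_of_mem_erase hu) (Finset.ne_of_mem_erase hu)⟩
  · obtain ⟨g, hg, -⟩ := hD.exists_isOcc_inSpan hf₀
    rw [← hg.2.1 ⟨v, hD.1.1⟩]
    exact List.get_mem _ _
  · obtain ⟨g, hg, hgf⟩ := hD.exists_isOcc_inSpan hf
    exact hgf.symInWindow ⟨g ⟨v, hD.1.1⟩, hg.2.1 _, ⟨_, le_rfl⟩, ⟨_, le_rfl⟩⟩

theorem clN_nodes_sdiff_eraseNode {G : Episode α} {v : ℕ} (hv : v ∈ G.nodes) :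
    (↑((clN s ρ G).nodes \ (G.eraseNode v).nodes) : Set ℕ) =
      insert v ↑((clN s ρ G).nodes \ G.nodes) := by
  have hv' : v ∈ (clN s ρ G).nodes := subset_addNodes hv
  ext x
  simp only [eraseNode, Finset.coe_sdiff, Set.mem_sdiff, Finset.mem_coe, Finset.mem_erase,
    Set.mem_insert_iff]
  by_cases hx : x = v
  · subst hx; simp [hv']
  · simp [hx]

theorem clN_lab_image_sdiff_eraseNode {G : Episode α} {v : ℕ} (hv : v ∈ G.nodes) :
    (clN s ρ G).lab '' ↑((clN s ρ G).nodes \ (G.eraseNode v).nodes) =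
      insert (G.lab v) ↑(newLabels s ρ G) := by
  rw [clN_nodes_sdiff_eraseNode hv, Set.image_insert_eq, clN_lab_of_mem hv]
  exact congrArg _ clN_lab_image

theorem nonempty_embedding_clN_eraseNode {G : Episode α} {v : ℕ} (hv : v ∈ G.nodes) :
    Nonempty (Embedding (clN s ρ (G.eraseNode v)) (clN s ρ G)) := by
  refine Embedding.nonempty_of_core (C := (G.eraseNode v).nodes)
    ((Finset.erase_subset _ _).trans subset_addNodes) (fun x hx => ?_) (fun x y h => ?_)
    clN_lab_injOn ?_
  · rw [clN_lab_of_mem hx, clN_lab_of_mem (Finset.mem_of_mem_erase hx)]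
    rfl
  · exact ⟨((G.eraseNode v).edge_mem h).1, ((G.eraseNode v).edge_mem h).2, h.1⟩
  · rw [clN_lab_image_sdiff_eraseNode hv, clN_lab_image]
    exact_mod_cast newLabels_eraseNode_subset G v

theorem DerivableNode.nonempty_embedding_clN {G : Episode α} (hS : G.Strict) {v : ℕ}
    (hD : DerivableNode s ρ G v) (hocc : Occurs s ρ (G.eraseNode v)) :
    Nonempty (Embedding (clN s ρ G) (clN s ρ (G.eraseNode v))) := by
  obtain ⟨hv, hsol⟩ := hD.1
  have hsol_ne : ∀ ⦃x y⦄, G.edge x y → x ≠ v ∧ y ≠ v := fun x y h =>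
    ⟨fun hx => (hsol y).2 (hx ▸ h), fun hy => (hsol x).1 (hy ▸ h)⟩
  refine Embedding.nonempty_of_core (C := (G.eraseNode v).nodes) subset_addNodes
    (fun x hx => ?_) (fun x y h => ?_) ?_ ?_
  · rw [clN_lab_of_mem hx, clN_lab_of_mem (Finset.mem_of_mem_erase hx)]
    rfl
  · obtain ⟨hx, hy⟩ := hsol_ne h
    exact ⟨Finset.mem_erase.2 ⟨hx, (G.edge_mem h).1⟩, Finset.mem_erase.2 ⟨hy, (G.edge_mem h).2⟩,
      h, hx, hy⟩
  · rw [clN_nodes_sdiff_eraseNode hv, Set.injOn_insert (by simp [hv])]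
    refine ⟨clN_lab_injOn, ?_⟩
    rw [clN_lab_image, clN_lab_of_mem hv]
    exact fun h => (mem_newLabels.1 h).2.2 v hv rfl
  · rw [clN_lab_image_sdiff_eraseNode hv, clN_lab_image, Set.insert_subset_iff]
    exact ⟨hD.lab_mem_newLabels hS hocc, by exact_mod_cast hD.newLabels_subset⟩

theorem covers_icl_eraseNode {G : Episode α} (hG : inS G) {v : ℕ} (hD : DerivableNode s ρ G v)
    (t : List α) : Covers t (icl s ρ G) ↔ Covers t (icl s ρ (G.eraseNode v)) := by
  by_cases hocc : Occurs s ρ (G.eraseNode v)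
  · obtain ⟨φ⟩ := nonempty_embedding_clN_eraseNode (s := s) (ρ := ρ) hD.1.1
    obtain ⟨ψ⟩ := hD.nonempty_embedding_clN hG.2.2 hocc
    exact ⟨fun h => h.of_embedding φ.clE, fun h => h.of_embedding ψ.clE⟩
  · have hG_occ : ¬ Occurs s ρ G := fun ⟨f, hf⟩ => hocc ⟨_, hf.comp (Embedding.eraseNode G v)⟩
    obtain ⟨U, hU, hcard, -⟩ := hD.2
    have hU_ne : U.Nonempty := by
      rw [← Finset.card_pos, hcard]
      exact Finset.card_pos.2 ⟨v, hD.1.1⟩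
    exact iff_of_false (not_covers_clE ⟨v, subset_addNodes hD.1.1⟩ fun ⟨f, hf⟩ => hG_occ
      ⟨_, hf.comp (Embedding.toClN G)⟩) (not_covers_clE (hU_ne.mono hU) fun ⟨f, hf⟩ => hocc
      ⟨_, hf.comp (Embedding.toClN _)⟩)

end NodeRemoval

end Episode

open Episode in
/-- Removing a derivable proper skeleton edge or a derivable solitary node
does not change the i-closure: if `e` is a derivable proper skeleton edge of
`G ∈ 𝒮`, then `icl(G) = icl(G − e)`, and if `v` is a derivable solitary node,
then `icl(G) = icl(G − v)` (the i-closures being the same episode, i.e.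
covered by exactly the same sequences). -/
theorem stmt18 {α : Type*} [LinearOrder α] (s : List α) (ρ : ℕ)
    (G : Episode α) (hG : inS G) :
    (∀ e, DerivableEdge s ρ G e → icl s ρ G = icl s ρ (G.eraseEdge e)) ∧
    ∀ v, DerivableNode s ρ G v →
      ∀ t : List α, Covers t (icl s ρ G) ↔ Covers t (icl s ρ (G.eraseNode v)) :=
  ⟨fun _ hD => icl_eraseEdge hG hD, fun _ hD => covers_icl_eraseNode hG hD⟩
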